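/- In the deterministic stopping rule setting with μ = 0 (i.e., the distribution of T = √N(μ̂_N − μ) has density f(u) = φ(u)·1_{u>0} + φ(u)(1 − Φ(u))), for every x ≥ 0: P[−x ≤ T ≤ x] = 2Φ(x) − 1. In other words, symmetric normal-based confidence intervals have exactly nominal coverage despite T not being standard normal. -/

import Mathlib

open MeasureTheory Set Filter

noncomputable def stdPhi (x : ℝ) : ℝ := (Real.sqrt (2 * Real.pi))⁻¹ * Real.exp (-x ^ 2 / 2)

noncomputable def stdPhiCdf (x : ℝ) : ℝ := ∫ t in Set.Iio x, stdPhi t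

noncomputable def fdens (u : ℝ) : ℝ :=
  stdPhi u * (if 0 < u then (1 : ℝ) else 0) + stdPhi u * (1 - stdPhiCdf u)

lemma stdPhi_nonneg (x : ℝ) : 0 ≤ stdPhi x := by
  unfold stdPhi; positivity

lemma continuous_stdPhi : Continuous stdPhi := by
  unfold stdPhi; fun_prop

lemma stdPhi_eq (x : ℝ) : stdPhi x = (Real.sqrt (2 * Real.pi))⁻¹ * Real.exp (-(1/2 : ℝ) * x ^ 2) := by
  unfold stdPhi; ring_nf

lemma stdPhi_even (x : ℝ) : stdPhi (-x) = stdPhi x := by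
  unfold stdPhi; rw [neg_pow]; ring_nf

lemma integrable_stdPhi : Integrable stdPhi := by
  have h : Integrable (fun x : ℝ => Real.exp (-(1/2 : ℝ) * x ^ 2)) :=
    integrable_exp_neg_mul_sq (by norm_num)
  have h2 := h.const_mul (Real.sqrt (2 * Real.pi))⁻¹
  exact h2.congr (ae_of_all _ fun x => (stdPhi_eq x).symm)

lemma integral_stdPhi : ∫ x, stdPhi x = 1 := by
  simp_rw [stdPhi_eq]
  rw [MeasureTheory.integral_const_mul, integral_gaussian]
  have h : Real.pi / (1/2 : ℝ) = 2 * Real.pi := by ring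
  rw [h, inv_mul_cancel₀]
  exact (Real.sqrt_pos.mpr (by positivity)).ne'

lemma stdPhiCdf_nonneg (x : ℝ) : 0 ≤ stdPhiCdf x :=
  setIntegral_nonneg measurableSet_Iio fun t _ => stdPhi_nonneg t

lemma stdPhiCdf_le_one (x : ℝ) : stdPhiCdf x ≤ 1 := by
  rw [← integral_stdPhi]
  exact setIntegral_le_integral integrable_stdPhi (ae_of_all _ stdPhi_nonneg)

lemma stdPhiCdf_neg (x : ℝ) : stdPhiCdf (-x) = 1 - stdPhiCdf x := by
  have h1 : stdPhiCdf (-x) = ∫ t in Ioi x, stdPhi t := by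
    rw [stdPhiCdf, ← integral_Iic_eq_integral_Iio]
    calc ∫ t in Iic (-x), stdPhi t = ∫ t in Iic (-x), stdPhi (-t) := by
          exact setIntegral_congr_fun measurableSet_Iic fun t _ => (stdPhi_even t).symm
      _ = ∫ t in Ioi (-(-x)), stdPhi t := integral_comp_neg_Iic (-x) stdPhi
      _ = ∫ t in Ioi x, stdPhi t := by rw [neg_neg]
  have h2 : stdPhiCdf x + ∫ t in Ioi x, stdPhi t = 1 := by
    rw [stdPhiCdf, ← integral_Iic_eq_integral_Iio,
      intervalIntegral.integral_Iic_add_Ioi integrable_stdPhi.integrableOn integrable_stdPhi.integrableOn,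
      integral_stdPhi]
  linarith

lemma stdPhiCdf_zero : stdPhiCdf 0 = 1/2 := by
  have h := stdPhiCdf_neg 0
  rw [neg_zero] at h
  linarith

lemma stdPhiCdf_sub (a b : ℝ) : stdPhiCdf b - stdPhiCdf a = ∫ t in a..b, stdPhi t := by
  rw [stdPhiCdf, stdPhiCdf, ← integral_Iic_eq_integral_Iio, ← integral_Iic_eq_integral_Iio]
  exact intervalIntegral.integral_Iic_sub_Iic integrable_stdPhi.integrableOn integrable_stdPhi.integrableOn

lemma hasDerivAt_stdPhiCdf (x : ℝ) : HasDerivAt stdPhiCdf (stdPhi x) x := by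
  have key : stdPhiCdf = fun y => stdPhiCdf 0 + ∫ t in (0:ℝ)..y, stdPhi t := by
    funext y
    rw [← stdPhiCdf_sub 0 y]; ring
  rw [key]
  have h : HasDerivAt (fun y => ∫ t in (0:ℝ)..y, stdPhi t) (stdPhi x) x :=
    intervalIntegral.integral_hasDerivAt_right integrable_stdPhi.intervalIntegrable
      (continuous_stdPhi.stronglyMeasurableAtFilter _ _) continuous_stdPhi.continuousAt
  exact h.const_add _

lemma continuous_stdPhiCdf : Continuous stdPhiCdf :=
  continuous_iff_continuousAt.mpr fun x => (hasDerivAt_stdPhiCdf x).continuousAt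

lemma hasDerivAt_H (u : ℝ) :
    HasDerivAt (fun v => -(1 - stdPhiCdf v) ^ 2 / 2) (stdPhi u * (1 - stdPhiCdf u)) u := by
  have h : HasDerivAt (fun v => (1 : ℝ) - stdPhiCdf v) (-stdPhi u) u := by
    have := (hasDerivAt_const u (1:ℝ)).sub (hasDerivAt_stdPhiCdf u)
    simp only [zero_sub] at this
    exact this
  have h2 : HasDerivAt (fun v => -(1 - stdPhiCdf v) ^ 2 / 2)
      (-(((2:ℕ):ℝ) * (1 - stdPhiCdf u) ^ (2 - 1) * -stdPhi u) / 2) u := ((h.pow 2).neg).div_const 2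
  convert h2 using 1
  ring

theorem coverage_mu_zero
    {Ω : Type*} [MeasurableSpace Ω] (P : Measure Ω) [IsProbabilityMeasure P]
    (T : Ω → ℝ) (hT : Measurable T)
    (hdens : Measure.map T P = volume.withDensity (fun u => ENNReal.ofReal (fdens u)))
    (x : ℝ) (hx : 0 ≤ x) :
    (P {ω | -x ≤ T ω ∧ T ω ≤ x}).toReal = 2 * stdPhiCdf x - 1 := by
  have hset : {ω | -x ≤ T ω ∧ T ω ≤ x} = T ⁻¹' (Icc (-x) x) := rfl
  have hmapped : P {ω | -x ≤ T ω ∧ T ω ≤ x}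
      = ∫⁻ u in Icc (-x) x, ENNReal.ofReal (fdens u) := by
    rw [hset, ← Measure.map_apply hT measurableSet_Icc, hdens,
      withDensity_apply _ measurableSet_Icc]
  -- nonnegativity of fdens
  have hnn : ∀ u, 0 ≤ fdens u := by
    intro u
    unfold fdens
    have h1 : 0 ≤ stdPhi u := stdPhi_nonneg u
    have h2 : stdPhiCdf u ≤ 1 := stdPhiCdf_le_one u
    have h3 : (0:ℝ) ≤ if 0 < u then (1:ℝ) else 0 := by positivity
    have := mul_nonneg h1 h3
    nlinarith
  -- measurability
  have hmeas : AEStronglyMeasurable fdens (volume.restrict (Icc (-x) x)) := by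
    unfold fdens
    apply AEStronglyMeasurable.add
    · exact (continuous_stdPhi.measurable.mul
        (Measurable.ite measurableSet_Ioi measurable_const measurable_const)).aestronglyMeasurable
    · exact (continuous_stdPhi.mul
        (continuous_const.sub continuous_stdPhiCdf)).aestronglyMeasurable
  have htoReal : (P {ω | -x ≤ T ω ∧ T ω ≤ x}).toReal = ∫ u in Icc (-x) x, fdens u := by
    rw [hmapped, ← integral_eq_lintegral_of_nonneg_ae (ae_of_all _ hnn) hmeas]
  rw [htoReal]
  -- rewrite the indicator part
  have heq : (fun u => stdPhi u * (if 0 < u then (1:ℝ) else 0)) = (Ioi 0).indicator stdPhi := by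
    funext u
    by_cases h : 0 < u <;> simp [Set.indicator_apply, Set.mem_Ioi, h]
  have hint1 : IntegrableOn (fun u => stdPhi u * (if 0 < u then (1:ℝ) else 0)) (Icc (-x) x) := by
    rw [heq]
    exact (integrable_stdPhi.indicator measurableSet_Ioi).integrableOn
  have hint2 : IntegrableOn (fun u => stdPhi u * (1 - stdPhiCdf u)) (Icc (-x) x) :=
    (continuous_stdPhi.mul (continuous_const.sub continuous_stdPhiCdf)).integrableOn_Icc
  have hsplit : ∫ u in Icc (-x) x, fdens u
      = (∫ u in Icc (-x) x, stdPhi u * (if 0 < u then (1:ℝ) else 0))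
        + ∫ u in Icc (-x) x, stdPhi u * (1 - stdPhiCdf u) := by
    unfold fdens
    exact integral_add hint1 hint2
  rw [hsplit]
  -- first integral
  have hI1 : (∫ u in Icc (-x) x, stdPhi u * (if 0 < u then (1:ℝ) else 0))
      = stdPhiCdf x - 1/2 := by
    rw [heq, setIntegral_indicator measurableSet_Ioi]
    have hIcc : Icc (-x) x ∩ Ioi 0 = Ioc 0 x := by
      ext u
      simp only [mem_inter_iff, mem_Icc, mem_Ioi, mem_Ioc]
      constructor
      · rintro ⟨⟨_, h2⟩, h3⟩; exact ⟨h3, h2⟩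
      · rintro ⟨h1, h2⟩; exact ⟨⟨by linarith, h2⟩, h1⟩
    rw [hIcc, ← intervalIntegral.integral_of_le hx, ← stdPhiCdf_sub 0 x, stdPhiCdf_zero]
  -- second integral
  have hI2 : (∫ u in Icc (-x) x, stdPhi u * (1 - stdPhiCdf u)) = stdPhiCdf x - 1/2 := by
    rw [integral_Icc_eq_integral_Ioc, ← intervalIntegral.integral_of_le (by linarith : -x ≤ x)]
    rw [intervalIntegral.integral_eq_sub_of_hasDerivAt (fun u _ => hasDerivAt_H u)
      ((continuous_stdPhi.mul (continuous_const.sub continuous_stdPhiCdf)).intervalIntegrable _ _)]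
    rw [stdPhiCdf_neg]
    ring
  rw [hI1, hI2]
  ring
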